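/- arXiv:1410.1970 — 2 statements merged into one kernel-verified Lean document; each statement's English description precedes it below -/
import Mathlib

section
/- Let κ be an infinite cardinal, a : κ → 2, f the 'disagreement rank' function f(x) = 0 if x = a else (least α with x(α) ≠ a(α)) + 1, and g : (κ → 2) → κ with f ≤ g pointwise. Define T as the tree of t ∈ 2^{<κ} such that every initial segment s of t satisfies: every x : κ → 2 extending s has g(x) ≥ dom(s). Then a is the unique function x : κ → 2 with x↾α ∈ T for all α < κ. -/
open Cardinal

/-- Lemma 3.1: with `f` the disagreement-rank function of `a : κ → 2` and `g`
dominating `f` with values `< κ`, the function `a` is (up to values below `κ`)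
the unique `x` all of whose restrictions lie on the tree `T` determined by `g`. -/
theorem stmt5 (κ : Cardinal) (hκ : ℵ₀ ≤ κ) (a : Ordinal → Bool)
    (f g : (Ordinal → Bool) → Ordinal)
    (hf0 : ∀ x : Ordinal → Bool, (∀ β < κ.ord, x β = a β) → f x = 0)
    (hf1 : ∀ (x : Ordinal → Bool) (α : Ordinal), α < κ.ord → x α ≠ a α →
      (∀ β < α, x β = a β) → f x = α + 1)
    (hg : ∀ x, f x ≤ g x) (hgκ : ∀ x, g x < κ.ord) :
    -- `Branch x` says: every restriction `x↾α` (α < κ) lies on the tree `T`,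
    -- i.e. every `y ≠ a` extending `x↾α` satisfies `g y ≥ α`.
    (∀ α < κ.ord, ∀ y : Ordinal → Bool,
        (∀ β < α, y β = a β) → (∃ β < κ.ord, y β ≠ a β) → α ≤ g y) ∧
      (∀ x : Ordinal → Bool,
        (∀ α < κ.ord, ∀ y : Ordinal → Bool,
          (∀ β < α, y β = x β) → (∃ β < κ.ord, y β ≠ a β) → α ≤ g y) →
        ∀ β < κ.ord, x β = a β) := by
  constructor
  · intro α hα y hagree ⟨β, hβ, hne⟩
    -- least disagreement point of y with a
    have hex : ∃ γ, y γ ≠ a γ := ⟨β, hne⟩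
    classical
    set γ := sInf {γ | y γ ≠ a γ} with hγdef
    have hγmem : y γ ≠ a γ := csInf_mem hex
    have hγle : γ ≤ β := csInf_le' hne
    have hγlt : γ < κ.ord := lt_of_le_of_lt hγle hβ
    have hbelow : ∀ δ < γ, y δ = a δ := by
      intro δ hδ
      by_contra h
      exact absurd (csInf_le' h : γ ≤ δ) hδ.not_ge
    have hfy : f y = γ + 1 := hf1 y γ hγlt hγmem hbelow
    have hαγ : α ≤ γ := by
      by_contra h
      exact hγmem (hagree γ (not_le.mp h))
    calc α ≤ γ + 1 := le_trans hαγ (le_of_lt (Order.lt_succ γ))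
      _ = f y := hfy.symm
      _ ≤ g y := hg y
  · intro x hx β hβ
    by_contra hne
    have hlim := Cardinal.isSuccLimit_ord hκ
    have h1 : g x + 1 ≤ g x :=
      hx (g x + 1) (hlim.succ_lt (hgκ x)) x (fun _ _ => rfl) ⟨β, hβ, hne⟩
    exact absurd h1 (by simp)
end

section
/- Suppose ω₁ ≤ κ < 𝔱 and λ ≤ 2^ω. Then there exists F : λ^{<κ} → [ω]^ω such that t₁ ⊑ t₂ implies F(t₂) ⊆* F(t₁), and incomparable t₁, t₂ have F(t₁) ∩ F(t₂) finite, where λ^{<κ} denotes sequences of elements of λ of length < κ. -/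
open Cardinal

/-- The tower number `𝔱`. -/
noncomputable def towerNumber : Cardinal :=
  sInf { c : Cardinal |
    ∃ S : c.ord.ToType → Set ℕ,
      (∀ i, (S i).Infinite) ∧
      (∀ i j, i < j → ((S j) \ (S i)).Finite) ∧
      ¬ ∃ T : Set ℕ, T.Infinite ∧ ∀ i, (T \ S i).Finite }

open Set

/-!
Build the sets by transfinite recursion along the sequence. At a successor stage the current
infinite set is split into `λ` pairwise almost disjoint infinite pieces, one for each possible next
entry; this is possible because the `2 ^ ω` branches of the binary tree, coded as sets of natural
numbers, are pairwise almost disjoint. At a limit stage `γ < κ` the sets built so far form a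
`⊆*`-decreasing chain; along a cofinal subsequence it has length `cf γ < 𝔱`, so it has an infinite
pseudo-intersection. If two sequences first differ at `β`, their sets are almost contained in two
almost disjoint pieces of the same set from stage `β`.
-/

def AlmostSubset {α : Type*} (A B : Set α) : Prop := (A \ B).Finite

infix:50 " ⊆* " => AlmostSubset

namespace AlmostSubset

variable {α : Type*} {A B C : Set α}

theorem of_subset (h : A ⊆ B) : A ⊆* B := by
  simp [AlmostSubset, sdiff_eq_empty.2 h]

theorem refl (A : Set α) : A ⊆* A := of_subset subset_rfl

theorem trans (hAB : A ⊆* B) (hBC : B ⊆* C) : A ⊆* C :=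
  (hAB.union hBC).subset (sdiff_triangle A B C)

end AlmostSubset

theorem Set.Finite.inter_of_almostSubset {α : Type*} {A A' B B' : Set α} (h : (B ∩ B').Finite)
    (hA : A ⊆* B) (hA' : A' ⊆* B') : (A ∩ A').Finite := by
  refine ((hA.union hA').union h).subset fun x ⟨hx, hx'⟩ => ?_
  by_cases hB : x ∈ B <;> by_cases hB' : x ∈ B' <;> simp_all

noncomputable def prefixCode (f : ℕ → Bool) (n : ℕ) : ℕ :=
  Encodable.encode (List.ofFn fun i : Fin n => f i)

theorem eq_and_eqOn_of_prefixCode_eq {f g : ℕ → Bool} {n m : ℕ}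
    (h : prefixCode f n = prefixCode g m) : n = m ∧ ∀ i < n, f i = g i := by
  have hl := Encodable.encode_injective h
  obtain rfl : n = m := by simpa using congrArg List.length hl
  exact ⟨rfl, fun i hi => congrFun (List.ofFn_injective hl) ⟨i, hi⟩⟩

theorem exists_almostDisjoint_bool_indexed : ∃ P : (ℕ → Bool) → Set ℕ,
    (∀ f, (P f).Infinite) ∧ Pairwise fun f g => (P f ∩ P g).Finite := by
  refine ⟨fun f => range (prefixCode f), fun f => infinite_range_of_injective
    fun _ _ h => (eq_and_eqOn_of_prefixCode_eq h).1, fun f g hfg => ?_⟩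
  obtain ⟨k, hk⟩ := Function.ne_iff.1 hfg
  refine ((finite_Iic k).image (prefixCode f)).subset ?_
  rintro _ ⟨⟨n, rfl⟩, m, hm⟩
  exact ⟨n, not_lt.1 fun hkn => hk ((eq_and_eqOn_of_prefixCode_eq hm.symm).2 k hkn), rfl⟩

theorem exists_almostDisjoint_of_infinite {Λ : Type*} (hΛ : #Λ ≤ 2 ^ ℵ₀) {A : Set ℕ}
    (hA : A.Infinite) : ∃ Q : Λ → Set ℕ,
      (∀ l, (Q l).Infinite ∧ Q l ⊆ A) ∧ Pairwise fun l l' => (Q l ∩ Q l').Finite := by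
  obtain ⟨ι⟩ : Nonempty (Λ ↪ (ℕ → Bool)) := by
    rw [← Cardinal.lift_mk_le', ← Cardinal.power_def, mk_bool, mk_nat]
    simpa using hΛ
  obtain ⟨P, hPinf, hPdisj⟩ := exists_almostDisjoint_bool_indexed
  let e : ℕ → ℕ := fun n => hA.natEmbedding A n
  have he : e.Injective := Subtype.val_injective.comp (hA.natEmbedding A).injective
  refine ⟨fun l => e '' P (ι l), fun l => ⟨(hPinf _).image he.injOn, ?_⟩, fun l l' hl => ?_⟩
  · rintro _ ⟨n, -, rfl⟩
    exact (hA.natEmbedding A n).2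
  · change (e '' _ ∩ e '' _).Finite
    rw [← image_inter he]
    exact (hPdisj (ι.injective.ne hl)).image e

theorem exists_splitting {Λ : Type*} (hΛ : #Λ ≤ 2 ^ ℵ₀) : ∃ split : Set ℕ → Λ → Set ℕ,
    ∀ A : Set ℕ, A.Infinite → (∀ l, (split A l).Infinite ∧ split A l ⊆ A) ∧
      Pairwise fun l l' => (split A l ∩ split A l').Finite := by
  choose! split hsplit using fun (A : Set ℕ) (hA : A.Infinite) =>
    exists_almostDisjoint_of_infinite hΛ hA
  exact ⟨split, hsplit⟩

def HasPseudoIntersections (α : Type*) (o : Ordinal) : Prop :=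
  ∀ S : Ordinal → Set α, (∀ β < o, (S β).Infinite) → (∀ β γ, β ≤ γ → γ < o → S γ ⊆* S β) →
    ∃ T : Set α, T.Infinite ∧ ∀ β < o, T ⊆* S β

theorem exists_pseudoIntersection_of_lt_towerNumber {c : Cardinal} (hc : c < towerNumber)
    (S : c.ord.ToType → Set ℕ) (hinf : ∀ i, (S i).Infinite) (hanti : ∀ i j, i < j → S j ⊆* S i) :
    ∃ T : Set ℕ, T.Infinite ∧ ∀ i, T ⊆* S i := by
  by_contra h
  exact hc.not_ge (csInf_le' ⟨S, hinf, hanti, h⟩)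

theorem hasPseudoIntersections_of_cof_lt_towerNumber {o : Ordinal} (ho : o.cof < towerNumber) :
    HasPseudoIntersections ℕ o := by
  intro S hinf hanti
  obtain ⟨f, hf⟩ := Ordinal.exists_isFundamentalSeq (o := o) rfl
  let g := fun i => (f (Ordinal.ToType.mk.symm i) : Ordinal)
  have hg : StrictMono g := fun i j hij =>
    hf.strictMono (Ordinal.ToType.mk.symm.lt_iff_lt.2 hij)
  obtain ⟨T, hT, hTS⟩ := exists_pseudoIntersection_of_lt_towerNumber ho (S ∘ g)
    (fun i => hinf _ (f _).2) (fun i j hij => hanti _ _ (hg hij).le (f _).2)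
  refine ⟨T, hT, fun β hβ => ?_⟩
  obtain ⟨_, ⟨i, rfl⟩, hβi⟩ := hf.isCofinal_range ⟨β, hβ⟩
  have hTf := hTS (Ordinal.ToType.mk i)
  simp only [Function.comp_apply, g, OrderIso.symm_apply_apply] at hTf
  exact hTf.trans (hanti β _ hβi (f i).2)

section SplittingTree

variable {α Λ : Type*}

open Classical in
noncomputable def pseudoIntersection (o : Ordinal) (S : ∀ β < o, Set α) : Set α :=
  if h : ∃ T : Set α, T.Infinite ∧ ∀ β (hβ : β < o), T ⊆* S β hβ then h.choose else ∅

theorem pseudoIntersection_spec {o : Ordinal} {S : ∀ β < o, Set α}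
    (h : ∃ T : Set α, T.Infinite ∧ ∀ β (hβ : β < o), T ⊆* S β hβ) :
    (pseudoIntersection o S).Infinite ∧ ∀ β (hβ : β < o), pseudoIntersection o S ⊆* S β hβ := by
  rw [pseudoIntersection, dif_pos h]
  exact h.choose_spec

/-- `splittingTree split o t` is the paper's `F (t ↾ o)`. -/
noncomputable def splittingTree (split : Set α → Λ → Set α) (o : Ordinal) (t : Ordinal → Λ) :
    Set α :=
  Ordinal.limitRecOn o (fun _ => Set.univ) (fun β F t => split (F t) (t β))
    (fun o _ F t => pseudoIntersection o fun β hβ => F β hβ t) t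

variable (split : Set α → Λ → Set α)

@[simp]
theorem splittingTree_zero (t : Ordinal → Λ) : splittingTree split 0 t = Set.univ := by
  simp [splittingTree]

@[simp]
theorem splittingTree_add_one (o : Ordinal) (t : Ordinal → Λ) :
    splittingTree split (o + 1) t = split (splittingTree split o t) (t o) := by
  simp [splittingTree]

theorem splittingTree_of_isSuccLimit {o : Ordinal} (ho : Order.IsSuccLimit o) (t : Ordinal → Λ) :
    splittingTree split o t = pseudoIntersection o fun β _ => splittingTree split β t := by
  simp [splittingTree, Ordinal.limitRecOn_limit _ _ _ _ ho]

theorem splittingTree_congr {o : Ordinal} {t t' : Ordinal → Λ} (h : ∀ β < o, t β = t' β) :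
    splittingTree split o t = splittingTree split o t' := by
  induction o using Ordinal.limitRecOn with
  | zero => simp
  | add_one o ih =>
    rw [splittingTree_add_one, splittingTree_add_one, h o (lt_add_one o),
      ih fun β hβ => h β (hβ.trans (lt_add_one o))]
  | limit o ho ih =>
    simp only [splittingTree_of_isSuccLimit split ho]
    congr 1
    funext β hβ
    exact ih β hβ fun γ hγ => h γ (hγ.trans hβ)

variable {split} {δ : Ordinal}

theorem splittingTree_infinite_and_almostSubset [Infinite α]
    (hsplit : ∀ A : Set α, A.Infinite → ∀ l, (split A l).Infinite ∧ split A l ⊆ A)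
    (hδ : ∀ o < δ, HasPseudoIntersections α o) {o : Ordinal} (ho : o < δ) (t : Ordinal → Λ) :
    (splittingTree split o t).Infinite ∧
      ∀ β ≤ o, splittingTree split o t ⊆* splittingTree split β t := by
  induction o using Ordinal.limitRecOn with
  | zero =>
    simp only [nonpos_iff_eq_zero, forall_eq, splittingTree_zero]
    exact ⟨Set.infinite_univ, .refl _⟩
  | add_one o ih =>
    obtain ⟨hinf, hsub⟩ := ih ((lt_add_one o).trans ho)
    obtain ⟨hinf_succ, hsucc_sub⟩ := hsplit _ hinf (t o)
    rw [splittingTree_add_one]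
    refine ⟨hinf_succ, fun β hβ => ?_⟩
    rcases hβ.lt_or_eq with hβ | rfl
    · exact (AlmostSubset.of_subset hsucc_sub).trans (hsub β (Order.lt_add_one_iff.1 hβ))
    · rw [splittingTree_add_one]
      exact .refl _
  | limit o hlim ih =>
    obtain ⟨T, hT, hTS⟩ := hδ o ho (fun β => splittingTree split β t)
      (fun β hβ => (ih β hβ (hβ.trans ho)).1)
      (fun β γ hβγ hγ => (ih γ hγ (hγ.trans ho)).2 β hβγ)
    obtain ⟨hinf, hsub⟩ := pseudoIntersection_spec ⟨T, hT, hTS⟩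
    rw [splittingTree_of_isSuccLimit split hlim]
    refine ⟨hinf, fun β hβ => ?_⟩
    rcases hβ.lt_or_eq with hβ | rfl
    · exact hsub β hβ
    · rw [splittingTree_of_isSuccLimit split hlim]
      exact .refl _

theorem splittingTree_inter_finite [Infinite α]
    (hsplit : ∀ A : Set α, A.Infinite → ∀ l, (split A l).Infinite ∧ split A l ⊆ A)
    (hδ : ∀ o < δ, HasPseudoIntersections α o)
    (hdisj : ∀ A : Set α, A.Infinite → Pairwise fun l l' => (split A l ∩ split A l').Finite)
    {o o' β : Ordinal} (ho : o < δ) (ho' : o' < δ) (hβo : β < o) (hβo' : β < o')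
    {t t' : Ordinal → Λ} (hne : t β ≠ t' β) :
    (splittingTree split o t ∩ splittingTree split o' t').Finite := by
  obtain ⟨γ, hγ, hγ_min⟩ := wellFounded_lt.has_min {γ | t γ ≠ t' γ} ⟨β, hne⟩
  have hγβ : γ ≤ β := not_lt.1 (hγ_min β hne)
  have hagree : ∀ ξ < γ, t ξ = t' ξ := fun ξ hξ => not_not.1 fun h => hγ_min ξ h hξ
  have hsucc : (splittingTree split (γ + 1) t ∩ splittingTree split (γ + 1) t').Finite := by
    rw [splittingTree_add_one, splittingTree_add_one, splittingTree_congr split hagree]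
    exact hdisj _ (splittingTree_infinite_and_almostSubset hsplit hδ
      ((hγβ.trans_lt hβo).trans ho) t').1 hγ
  exact hsucc.inter_of_almostSubset
    ((splittingTree_infinite_and_almostSubset hsplit hδ ho t).2 _
      (Order.add_one_le_of_lt (hγβ.trans_lt hβo)))
    ((splittingTree_infinite_and_almostSubset hsplit hδ ho' t').2 _
      (Order.add_one_le_of_lt (hγβ.trans_lt hβo')))

end SplittingTree

theorem stmt9_general (κ : Cardinal) (h2 : κ < towerNumber)
    (Λ : Type) (hΛ : #Λ ≤ 2 ^ Cardinal.aleph0) :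
    ∃ F : Ordinal → (Ordinal → Λ) → Set ℕ,
      (∀ α < κ.ord, ∀ t, (F α t).Infinite) ∧
      (∀ α, ∀ t t' : Ordinal → Λ, (∀ β < α, t β = t' β) → F α t = F α t') ∧
      (∀ α α' : Ordinal, α ≤ α' → α' < κ.ord → ∀ t, ((F α' t) \ (F α t)).Finite) ∧
      (∀ α α' : Ordinal, α < κ.ord → α' < κ.ord → ∀ t t' : Ordinal → Λ,
        (∃ β, β < α ∧ β < α' ∧ t β ≠ t' β) → ((F α t) ∩ (F α' t')).Finite) := by
  obtain ⟨split, hsplit⟩ := exists_splitting hΛ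
  have hsplit_sub A hA := (hsplit A hA).1
  have hκ : ∀ o < κ.ord, HasPseudoIntersections ℕ o := fun o ho =>
    hasPseudoIntersections_of_cof_lt_towerNumber
      (((Ordinal.cof_le_card o).trans_lt (Cardinal.lt_ord.1 ho)).trans h2)
  refine ⟨splittingTree split,
    fun α hα t => (splittingTree_infinite_and_almostSubset hsplit_sub hκ hα t).1,
    fun α t t' h => splittingTree_congr split h,
    fun α α' hle hα' t => (splittingTree_infinite_and_almostSubset hsplit_sub hκ hα' t).2 α hle,
    ?_⟩
  rintro α α' hα hα' t t' ⟨β, hβα, hβα', hne⟩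
  exact splittingTree_inter_finite hsplit_sub hκ (fun A hA => (hsplit A hA).2) hα hα' hβα hβα' hne

/-- For `ω₁ ≤ κ < 𝔱` and `λ ≤ 2^ω`, there is `F : λ^{<κ} → [ω]^ω`
(encoded as `F : Ordinal → (Ordinal → Λ) → Set ℕ`, depending only on `t↾α`)
such that extensions get `⊆*`-smaller sets and incomparable sequences get
almost disjoint sets. -/
theorem stmt9 (κ : Cardinal) (h1 : Cardinal.aleph 1 ≤ κ) (h2 : κ < towerNumber)
    (Λ : Type) (hΛ : #Λ ≤ 2 ^ Cardinal.aleph0) :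
    ∃ F : Ordinal → (Ordinal → Λ) → Set ℕ,
      (∀ α < κ.ord, ∀ t, (F α t).Infinite) ∧
      (∀ α, ∀ t t' : Ordinal → Λ, (∀ β < α, t β = t' β) → F α t = F α t') ∧
      (∀ α α' : Ordinal, α ≤ α' → α' < κ.ord → ∀ t, ((F α' t) \ (F α t)).Finite) ∧
      (∀ α α' : Ordinal, α < κ.ord → α' < κ.ord → ∀ t t' : Ordinal → Λ,
        (∃ β, β < α ∧ β < α' ∧ t β ≠ t' β) → ((F α t) ∩ (F α' t')).Finite) :=
  stmt9_general κ h2 Λ hΛ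
end
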